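/- Let θ, α be nonconstant inner functions, D ∈ B(K_θ^⊥, K_α^⊥), and g, h ∈ H². Then ⟨D(αθh), αθg⟩ = ⟨(P⁻ C_α M_{conj θ})|_{θH²} ∘ (P_{αH²} D|_{θH²})* ∘ (M_θ C_α)|_{H²₋} (conj(z)·conj(g)), conj(z)·conj(h)⟩. Consequently, the matrix corner identity P⁻ D|_{H²₋} = (P⁻ C_α M_{conj θ})|_{θH²} (P_{αH²} D|_{θH²})* (M_θ C_α)|_{H²₋} holds if and only if ⟨D, αθh ⊗ αθg − conj(z)conj(g) ⊗ conj(z)conj(h)⟩ = 0 for all g, h ∈ H², i.e., D annihilates the rank-two operators αθh ⊗ αθg − z̄ḡ ⊗ z̄h̄. -/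

import Mathlib

open MeasureTheory Complex ComplexConjugate

noncomputable section

instance : Fact (0 < 2 * Real.pi) := ⟨by positivity⟩

abbrev 𝕋 : Type := AddCircle (2 * Real.pi)

abbrev m : Measure 𝕋 := AddCircle.haarAddCircle

def e : 𝕋 → ℂ := fun x => fourier 1 x

def Hardy2 : Set (𝕋 → ℂ) :=
  {f | MemLp f 2 m ∧ ∀ n : ℤ, n < 0 → fourierCoeff f n = 0}

def Hardy2neg : Set (𝕋 → ℂ) :=
  {f | MemLp f 2 m ∧ ∀ n : ℤ, 0 ≤ n → fourierCoeff f n = 0}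

def thetaH2 (θ : 𝕋 → ℂ) : Set (𝕋 → ℂ) :=
  {g | ∃ h ∈ Hardy2, g =ᵐ[m] fun x => θ x * h x}

def Kmodel (θ : 𝕋 → ℂ) : Set (𝕋 → ℂ) :=
  {f | f ∈ Hardy2 ∧ ∀ g ∈ thetaH2 θ, ∫ x, f x * conj (g x) ∂m = 0}

def Kperp (θ : 𝕋 → ℂ) : Set (𝕋 → ℂ) :=
  {f | ∃ g ∈ thetaH2 θ, ∃ h ∈ Hardy2neg, f =ᵐ[m] fun x => g x + h x}

def Cfun (θ f : 𝕋 → ℂ) : 𝕋 → ℂ := fun x => θ x * conj (e x) * conj (f x)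

def Jfun (f : 𝕋 → ℂ) : 𝕋 → ℂ := fun x => conj (e x) * conj (f x)

def IsInner (θ : 𝕋 → ℂ) : Prop :=
  MemLp θ ⊤ m ∧ (∀ᵐ x ∂m, ‖θ x‖ = 1) ∧ ∀ n : ℤ, n < 0 → fourierCoeff θ n = 0

def NCInner (θ : 𝕋 → ℂ) : Prop := IsInner θ ∧ ¬∃ c : ℂ, θ =ᵐ[m] fun _ => c

def IsPneg (f g : 𝕋 → ℂ) : Prop :=
  g ∈ Hardy2neg ∧ ∀ n : ℤ, n < 0 → fourierCoeff g n = fourierCoeff f n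

def IsPpos (f g : 𝕋 → ℂ) : Prop :=
  g ∈ Hardy2 ∧ ∀ n : ℤ, 0 ≤ n → fourierCoeff g n = fourierCoeff f n

def IsProjOn (S : Set (𝕋 → ℂ)) (f g : 𝕋 → ℂ) : Prop :=
  g ∈ S ∧ ∀ u ∈ S, ∫ x, (f x - g x) * conj (u x) ∂m = 0

/-!
Adjointness moves `D` off `θH²`: `⟨D(αθh), αθg⟩ = ⟨αθh, A*(θαg)⟩`, and since `|z| = 1` the
integrand `αθh · conj(A*(θαg))` equals `C_α(θ̄ A*(θαg)) · conj(z̄ h̄)`. Pairing with `z̄ h̄ ∈ H²₋`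
sees only the negative Fourier coefficients of the first factor, so it may be replaced by its
`P⁻`-projection; this is the first identity. The test functions `z̄ h̄`, `h ∈ H²`, include every
`z̄ⁿ` with `n ≥ 1`, so an element `p ∈ H²₋` is `P⁻ q` exactly when `⟨q, z̄ h̄⟩ = ⟨p, z̄ h̄⟩` for all
`h ∈ H²`, which turns the corner identity into the annihilation condition.
-/

theorem fourierCoeff_conj (f : 𝕋 → ℂ) (n : ℤ) :
    fourierCoeff (fun x => conj (f x)) n = conj (fourierCoeff f (-n)) := by
  simp only [fourierCoeff, ← integral_conj, smul_eq_mul, map_mul, neg_neg, ← fourier_neg]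

theorem fourierCoeff_fourier_mul (k : ℤ) (f : 𝕋 → ℂ) (n : ℤ) :
    fourierCoeff (fun x => fourier k x * f x) n = fourierCoeff f (n - k) := by
  simp only [fourierCoeff, smul_eq_mul, ← mul_assoc, ← fourier_add]
  ring_nf

theorem integral_mul_fourier_eq_fourierCoeff (f : 𝕋 → ℂ) (k : ℤ) :
    ∫ x, f x * fourier k x ∂m = fourierCoeff f (-k) := by
  simp only [fourierCoeff, smul_eq_mul, neg_neg, mul_comm]

theorem memLp_top_fourier (n : ℤ) : MemLp (fun x : 𝕋 => fourier n x) ⊤ m :=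
  memLp_top_of_bound (fourier n).continuous.aestronglyMeasurable 1
    (.of_forall fun x => by rw [fourier_apply, Circle.norm_coe])

theorem integral_mul_conj_eq_tsum_fourierCoeff {f g : 𝕋 → ℂ} (hf : MemLp f 2 m)
    (hg : MemLp g 2 m) :
    ∫ x, f x * conj (g x) ∂m = ∑' n : ℤ, fourierCoeff f n * conj (fourierCoeff g n) := by
  have hinner : ∫ x, f x * conj (g x) ∂m = inner ℂ (hg.toLp g) (hf.toLp f) := by
    rw [L2.inner_def]
    refine integral_congr_ae ?_
    filter_upwards [hf.coeFn_toLp, hg.coeFn_toLp] with x hfx hgx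
    rw [RCLike.inner_apply, hfx, hgx, mul_comm]
  have hrepr : ∀ (u : 𝕋 → ℂ) (hu : MemLp u 2 m) (n : ℤ),
      inner ℂ (fourierBasis n) (hu.toLp u) = fourierCoeff u n := fun u hu n => by
    rw [← fourierBasis.repr_apply_apply, fourierBasis_repr, fourierCoeff_congr_ae hu.coeFn_toLp]
  rw [hinner, ← fourierBasis.tsum_inner_mul_inner]
  refine tsum_congr fun n => ?_
  rw [← inner_conj_symm, hrepr g hg, hrepr f hf, mul_comm]

theorem exists_isPneg {f : 𝕋 → ℂ} (hf : MemLp f 2 m) : ∃ p, IsPneg f p := by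
  set a := fourierBasis.repr (hf.toLp f)
  have ha : Summable fun n : ℤ => ‖a n‖ ^ (2 : ENNReal).toReal :=
    (memℓp_gen_iff (by norm_num)).1 (lp.memℓp a)
  have hb : Memℓp (fun n : ℤ => if n < 0 then a n else 0) 2 := by
    refine memℓp_gen (ha.of_nonneg_of_le (fun n => by positivity) fun n => ?_)
    split_ifs
    · exact le_rfl
    · simp
  set p := (fourierBasis (T := 2 * Real.pi)).repr.symm (⟨_, hb⟩ : lp (fun _ : ℤ => ℂ) 2)
  have hp : ∀ n : ℤ, fourierCoeff (⇑p) n = if n < 0 then a n else 0 := fun n => by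
    rw [← fourierBasis_repr, LinearIsometryEquiv.apply_symm_apply]
  refine ⟨p, ⟨Lp.memLp _, fun n hn => ?_⟩, fun n hn => ?_⟩
  · rw [hp, if_neg (not_lt.2 hn)]
  · rw [hp, if_pos hn, fourierBasis_repr, fourierCoeff_congr_ae hf.coeFn_toLp]

theorem zero_mem_Hardy2 : (fun _ => 0 : 𝕋 → ℂ) ∈ Hardy2 :=
  ⟨MemLp.zero, fun n _ => by simp [fourierCoeff]⟩

theorem fourier_mem_Hardy2 {k : ℤ} (hk : 0 ≤ k) : (fun x => fourier k x : 𝕋 → ℂ) ∈ Hardy2 :=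
  ⟨(memLp_top_fourier k).mono_exponent le_top, fun n hn => by
    rw [fourierCoeff_fourier, Pi.single_apply, if_neg (by omega)]⟩

theorem IsInner.mem_Hardy2 {θ : 𝕋 → ℂ} (hθ : IsInner θ) : θ ∈ Hardy2 :=
  ⟨hθ.1.mono_exponent le_top, hθ.2.2⟩

theorem fourier_mul_conj_mem_Hardy2neg {h : 𝕋 → ℂ} (hh : h ∈ Hardy2) {k : ℤ} (hk : k < 0) :
    (fun x => fourier k x * conj (h x)) ∈ Hardy2neg := by
  refine ⟨(hh.1.star.mul' (memLp_top_fourier k)), fun n hn => ?_⟩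
  rw [fourierCoeff_fourier_mul, fourierCoeff_conj, hh.2 _ (by omega), map_zero]

theorem Jfun_mem_Hardy2neg {h : 𝕋 → ℂ} (hh : h ∈ Hardy2) : Jfun h ∈ Hardy2neg := by
  have hJ : Jfun h = fun x => fourier (-1) x * conj (h x) := by
    funext x
    rw [Jfun, e, fourier_neg]
  exact hJ ▸ fourier_mul_conj_mem_Hardy2neg hh (by norm_num)

theorem integral_mul_conj_eq_of_fourierCoeff_eq {q p w : 𝕋 → ℂ} (hq : MemLp q 2 m)
    (hp : MemLp p 2 m) (hw : w ∈ Hardy2neg)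
    (hqp : ∀ n : ℤ, n < 0 → fourierCoeff q n = fourierCoeff p n) :
    ∫ x, q x * conj (w x) ∂m = ∫ x, p x * conj (w x) ∂m := by
  rw [integral_mul_conj_eq_tsum_fourierCoeff hq hw.1,
    integral_mul_conj_eq_tsum_fourierCoeff hp hw.1]
  refine tsum_congr fun n => ?_
  rcases lt_or_ge n 0 with hn | hn
  · rw [hqp n hn]
  · simp [hw.2 n hn]

theorem integral_mul_conj_eq_zero_of_mem_Hardy2 {f w : 𝕋 → ℂ} (hf : f ∈ Hardy2)
    (hw : w ∈ Hardy2neg) : ∫ x, f x * conj (w x) ∂m = 0 := by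
  simpa using integral_mul_conj_eq_of_fourierCoeff_eq hf.1 MemLp.zero hw
    fun n hn => by rw [hf.2 n hn]; simp [fourierCoeff]

theorem mul_mem_Hardy2 {φ h : 𝕋 → ℂ} (hφ : MemLp φ ⊤ m) (hφH : φ ∈ Hardy2) (hh : h ∈ Hardy2) :
    (fun x => φ x * h x) ∈ Hardy2 := by
  refine ⟨hh.1.mul' hφ, fun n hn => ?_⟩
  have hcoeff : fourierCoeff (fun x => φ x * h x) n
      = ∫ x, φ x * conj (fourier n x * conj (h x)) ∂m := by
    simp only [fourierCoeff, smul_eq_mul, map_mul, conj_conj, fourier_neg]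
    exact integral_congr_ae (.of_forall fun x => by ring)
  rw [hcoeff, integral_mul_conj_eq_zero_of_mem_Hardy2 hφH (fourier_mul_conj_mem_Hardy2neg hh hn)]

theorem mul_mem_thetaH2 {θ h : 𝕋 → ℂ} (α : 𝕋 → ℂ) (hα : IsInner α) (hh : h ∈ Hardy2) :
    (fun x => α x * (θ x * h x)) ∈ thetaH2 θ :=
  ⟨fun x => α x * h x, mul_mem_Hardy2 hα.1 hα.mem_Hardy2 hh, .of_forall fun x => by ring⟩

theorem memLp_of_mem_thetaH2 {θ f : 𝕋 → ℂ} (hθ : MemLp θ ⊤ m) (hf : f ∈ thetaH2 θ) :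
    MemLp f 2 m := by
  obtain ⟨h, hh, hf⟩ := hf
  exact (hh.1.mul' hθ).ae_eq hf.symm

theorem memLp_of_mem_Kperp {θ f : 𝕋 → ℂ} (hθ : MemLp θ ⊤ m) (hf : f ∈ Kperp θ) :
    MemLp f 2 m := by
  obtain ⟨g, hg, h, hh, hf⟩ := hf
  exact ((memLp_of_mem_thetaH2 hθ hg).add hh.1).ae_eq hf.symm

theorem mem_Kperp_of_mem_Hardy2neg (θ : 𝕋 → ℂ) {f : 𝕋 → ℂ} (hf : f ∈ Hardy2neg) :
    f ∈ Kperp θ :=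
  ⟨fun _ => 0, ⟨fun _ => 0, zero_mem_Hardy2, .of_forall fun x => by simp⟩, f, hf,
    .of_forall fun x => by simp⟩

theorem conj_Jfun (h : 𝕋 → ℂ) (x : 𝕋) : conj (Jfun h x) = e x * h x := by
  simp [Jfun]

theorem integral_mul_conj_Jfun_fourier (f : 𝕋 → ℂ) (k : ℤ) :
    ∫ x, f x * conj (Jfun (fun y => fourier k y) x) ∂m = fourierCoeff f (-(k + 1)) := by
  simp only [conj_Jfun, e, ← fourier_add, ← integral_mul_fourier_eq_fourierCoeff, add_comm]

theorem isPneg_iff_integral_mul_conj_Jfun_eq {q p : 𝕋 → ℂ} (hq : MemLp q 2 m)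
    (hp : p ∈ Hardy2neg) :
    IsPneg q p ↔ ∀ h ∈ Hardy2,
      ∫ x, q x * conj (Jfun h x) ∂m = ∫ x, p x * conj (Jfun h x) ∂m := by
  refine ⟨fun hqp h hh => ?_, fun hqp => ⟨hp, fun n hn => ?_⟩⟩
  · exact integral_mul_conj_eq_of_fourierCoeff_eq hq hp.1 (Jfun_mem_Hardy2neg hh)
      fun n hn => (hqp.2 n hn).symm
  · have := hqp _ (fourier_mem_Hardy2 (k := -n - 1) (by omega))
    rwa [integral_mul_conj_Jfun_fourier, integral_mul_conj_Jfun_fourier, sub_add_cancel,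
      neg_neg, eq_comm] at this

theorem memLp_Cfun_conj_mul {θ α A : 𝕋 → ℂ} (hθ : MemLp θ ⊤ m) (hα : MemLp α ⊤ m)
    (hA : A ∈ thetaH2 θ) : MemLp (Cfun α fun x => conj (θ x) * A x) 2 m :=
  ((memLp_of_mem_thetaH2 hθ hA).mul' (r := 2) hθ.star).star.mul'
    ((memLp_top_fourier 1).star.mul' (r := ⊤) hα)

theorem Cfun_mul_conj_Jfun (α θ A h : 𝕋 → ℂ) (x : 𝕋) :
    Cfun α (fun y => conj (θ y) * A y) x * conj (Jfun h x) = α x * (θ x * h x) * conj (A x) := by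
  have he : conj (e x) * e x = 1 := by
    rw [mul_comm, mul_conj, normSq_eq_norm_sq, e, fourier_apply, Circle.norm_coe]
    norm_num
  simp only [Cfun, conj_Jfun, map_mul, conj_conj]
  linear_combination α x * θ x * h x * conj (A x) * he

theorem integral_D_mul_conj_eq_of_isPneg {θ α : 𝕋 → ℂ} (hθ : IsInner θ) (hα : IsInner α)
    {D Astar : (𝕋 → ℂ) → (𝕋 → ℂ)}
    (hAstar : ∀ v ∈ thetaH2 α, Astar v ∈ thetaH2 θ)
    (hadjA : ∀ u ∈ thetaH2 θ, ∀ v ∈ thetaH2 α,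
      ∫ x, D u x * conj (v x) ∂m = ∫ x, u x * conj (Astar v x) ∂m)
    {g h p : 𝕋 → ℂ} (hg : g ∈ Hardy2) (hh : h ∈ Hardy2)
    (hp : IsPneg (Cfun α fun x => conj (θ x) * Astar (fun y => θ y * (α y * g y)) x) p) :
    ∫ x, D (fun y => α y * (θ y * h y)) x * conj (α x * (θ x * g x)) ∂m
      = ∫ x, p x * conj (Jfun h x) ∂m := by
  set v := fun y => θ y * (α y * g y)
  have hv : v ∈ thetaH2 α := mul_mem_thetaH2 θ hθ hg
  calc ∫ x, D (fun y => α y * (θ y * h y)) x * conj (α x * (θ x * g x)) ∂m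
      = ∫ x, D (fun y => α y * (θ y * h y)) x * conj (v x) ∂m := by simp only [v, mul_left_comm]
    _ = ∫ x, α x * (θ x * h x) * conj (Astar v x) ∂m := hadjA _ (mul_mem_thetaH2 α hα hh) v hv
    _ = ∫ x, Cfun α (fun y => conj (θ y) * Astar v y) x * conj (Jfun h x) ∂m := by
      simp only [Cfun_mul_conj_Jfun]
    _ = ∫ x, p x * conj (Jfun h x) ∂m :=
      integral_mul_conj_eq_of_fourierCoeff_eq (memLp_Cfun_conj_mul hθ.1 hα.1 (hAstar v hv)) hp.1.1
        (Jfun_mem_Hardy2neg hh) fun n hn => (hp.2 n hn).symm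

theorem stmt15_general (θ α : 𝕋 → ℂ) (hθ : NCInner θ) (hα : NCInner α)
    (D Astar : (𝕋 → ℂ) → (𝕋 → ℂ))
    (hD : ∀ f ∈ Kperp θ, D f ∈ Kperp α)
    (hAstar : ∀ v ∈ thetaH2 α, Astar v ∈ thetaH2 θ)
    (hadjA : ∀ u ∈ thetaH2 θ, ∀ v ∈ thetaH2 α,
      ∫ x, D u x * conj (v x) ∂m = ∫ x, u x * conj (Astar v x) ∂m) :
    (∀ g ∈ Hardy2, ∀ h ∈ Hardy2, ∀ p : 𝕋 → ℂ,
      IsPneg (fun x => α x * conj (e x) *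
          conj (conj (θ x) * Astar (fun y => θ y * (α y * g y)) x)) p →
      ∫ x, D (fun y => α y * (θ y * h y)) x * conj (α x * (θ x * g x)) ∂m
        = ∫ x, p x * (e x * h x) ∂m) ∧
    ((∀ g ∈ Hardy2, ∀ p : 𝕋 → ℂ,
        IsPneg (fun x => α x * conj (e x) *
            conj (conj (θ x) * Astar (fun y => θ y * (α y * g y)) x)) p →
        IsPneg (D (fun y => conj (e y) * conj (g y))) p)
      ↔ ∀ g ∈ Hardy2, ∀ h ∈ Hardy2,
          ∫ x, D (fun y => α y * (θ y * h y)) x * conj (α x * (θ x * g x)) ∂m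
            = ∫ x, D (fun y => conj (e y) * conj (g y)) x
                * conj (conj (e x) * conj (h x)) ∂m) := by
  have hDJ : ∀ g ∈ Hardy2, MemLp (D (Jfun g)) 2 m := fun g hg =>
    memLp_of_mem_Kperp hα.1.1 (hD _ (mem_Kperp_of_mem_Hardy2neg θ (Jfun_mem_Hardy2neg hg)))
  refine ⟨fun g hg h hh p hp => ?_, ⟨fun hcorner g hg h hh => ?_, fun hannih g hg p hp => ?_⟩⟩
  · simpa only [conj_Jfun] using integral_D_mul_conj_eq_of_isPneg hθ.1 hα.1 hAstar hadjA hg hh hp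
  · obtain ⟨p, hp⟩ := exists_isPneg
      (memLp_Cfun_conj_mul hθ.1.1 hα.1.1 (hAstar _ (mul_mem_thetaH2 θ hθ.1 hg)))
    rw [integral_D_mul_conj_eq_of_isPneg hθ.1 hα.1 hAstar hadjA hg hh hp]
    exact ((isPneg_iff_integral_mul_conj_Jfun_eq (hDJ g hg) hp.1).1 (hcorner g hg p hp) h hh).symm
  · refine (isPneg_iff_integral_mul_conj_Jfun_eq (hDJ g hg) hp.1).2 fun h hh => ?_
    exact (hannih g hg h hh).symm.trans
      (integral_D_mul_conj_eq_of_isPneg hθ.1 hα.1 hAstar hadjA hg hh hp)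

/-- Lemma on rank-two annihilation for the lower-right corner: with
X = (P⁻ C_α M_{conj θ})|_{θH²} ∘ (P_{αH²} D|_{θH²})* ∘ (M_θ C_α)|_{H²₋} one has
⟨D(αθh), αθg⟩ = ⟨X(conj(z)conj(g)), conj(z)conj(h)⟩, and
P⁻ D|_{H²₋} = X  iff  ⟨D, αθh ⊗ αθg − conj(z)conj(g) ⊗ conj(z)conj(h)⟩ = 0 for all g, h ∈ H². -/
theorem stmt15 (θ α : 𝕋 → ℂ) (hθ : NCInner θ) (hα : NCInner α)
    (D Astar : (𝕋 → ℂ) → (𝕋 → ℂ))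
    (hD : ∀ f ∈ Kperp θ, D f ∈ Kperp α)
    (hDae : ∀ f g : 𝕋 → ℂ, f ∈ Kperp θ → g ∈ Kperp θ → f =ᵐ[m] g → D f =ᵐ[m] D g)
    (hAstar : ∀ v ∈ thetaH2 α, Astar v ∈ thetaH2 θ)
    (hadjA : ∀ u ∈ thetaH2 θ, ∀ v ∈ thetaH2 α,
      ∫ x, D u x * conj (v x) ∂m = ∫ x, u x * conj (Astar v x) ∂m) :
    (∀ g ∈ Hardy2, ∀ h ∈ Hardy2, ∀ p : 𝕋 → ℂ,
      IsPneg (fun x => α x * conj (e x) *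
          conj (conj (θ x) * Astar (fun y => θ y * (α y * g y)) x)) p →
      ∫ x, D (fun y => α y * (θ y * h y)) x * conj (α x * (θ x * g x)) ∂m
        = ∫ x, p x * (e x * h x) ∂m) ∧
    ((∀ g ∈ Hardy2, ∀ p : 𝕋 → ℂ,
        IsPneg (fun x => α x * conj (e x) *
            conj (conj (θ x) * Astar (fun y => θ y * (α y * g y)) x)) p →
        IsPneg (D (fun y => conj (e y) * conj (g y))) p)
      ↔ ∀ g ∈ Hardy2, ∀ h ∈ Hardy2,
          ∫ x, D (fun y => α y * (θ y * h y)) x * conj (α x * (θ x * g x)) ∂m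
            = ∫ x, D (fun y => conj (e y) * conj (g y)) x
                * conj (conj (e x) * conj (h x)) ∂m) :=
  stmt15_general θ α hθ hα D Astar hD hAstar hadjA
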